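/- Fix an integer d ≥ 3 and let τ_∞ be the measure on the closed unit ball 𝔻 of ℝ^{d−1} with density x ↦ (Γ((d+1)/2)/π^{(d−1)/2})(1 + x_d) with respect to Lebesgue measure, the coordinates of ℝ^{d−1} being labelled (x₂, …, x_d). Then: (a) for every 0 ≤ r ≤ 1, τ_∞(B_r(0)) = r^{d−1}, where B_r(0) is the closed Euclidean ball of radius r centered at the origin; and (b) for every 0 ≤ r ≤ 1 and y = (0, …, 0, −1 + r) ∈ ℝ^{d−1}, τ_∞(B_r(y)) = r^d. -/

import Mathlib

/-!
The normalising constant `Γ((d+1)/2) / π^((d-1)/2)` is `1 / vol 𝔻`, so `τ_∞` has density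
`(1 + x_d) / vol 𝔻` on `𝔻`. The linear part of an affine function integrates to zero over a ball
centred at the origin (the ball is symmetric under `x ↦ -x`), so by translation the integral of an
affine function over any ball is its value at the centre times the volume of the ball. Hence
`τ_∞(B_r(z)) = (1 + z_d) r^(d-1)` for every ball `B_r(z) ⊆ 𝔻`, and the two claims are the cases
`z = 0` and `z = (0, …, 0, -1 + r)`.
-/

open MeasureTheory Real Set

noncomputable section

/-- The limiting conditional exit distribution `τ_∞` on the closed unit ball of
`ℝ^{d-1}` (coordinates labelled `(x₂, …, x_d)`), with density
`x ↦ (Γ((d+1)/2)/π^{(d-1)/2}) (1 + x_d)` with respect to Lebesgue measure. -/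
def tauInfty (d : ℕ) (hd : 3 ≤ d) : Measure (EuclideanSpace ℝ (Fin (d - 1))) :=
  (volume.restrict (Metric.closedBall (0 : EuclideanSpace ℝ (Fin (d - 1))) 1)).withDensity
    (fun x => ENNReal.ofReal
      (Real.Gamma (((d : ℝ) + 1) / 2) / π ^ (((d : ℝ) - 1) / 2) * (1 + x ⟨d - 2, by omega⟩)))

open Metric Module

section
variable {E : Type*} [NormedAddCommGroup E] [NormedSpace ℝ E] [FiniteDimensional ℝ E]
  [MeasurableSpace E] [BorelSpace E] (μ : Measure E) [μ.IsAddHaarMeasure]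

theorem setIntegral_closedBall_zero_continuousLinearMap (L : E →L[ℝ] ℝ) (r : ℝ) :
    ∫ x in closedBall (0 : E) r, L x ∂μ = 0 := by
  have h := (Measure.measurePreserving_neg μ).setIntegral_preimage_emb
    (Homeomorph.neg E).measurableEmbedding L (closedBall 0 r)
  simp only [Set.neg_preimage, neg_closedBall, neg_zero, map_neg, integral_neg] at h
  linarith

theorem setIntegral_closedBall_const_add_continuousLinearMap (a : ℝ) (L : E →L[ℝ] ℝ) (z : E)
    (r : ℝ) : ∫ x in closedBall z r, (a + L x) ∂μ = (a + L z) * μ.real (closedBall z r) := by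
  have h := (measurePreserving_add_left μ z).setIntegral_preimage_emb
    (Homeomorph.addLeft z).measurableEmbedding (fun x => a + L x) (closedBall z r)
  simp only [preimage_add_closedBall, sub_self, map_add] at h
  rw [← h]
  have hint : IntegrableOn (fun x => L x) (closedBall (0 : E) r) μ :=
    L.continuous.continuousOn.integrableOn_compact (isCompact_closedBall 0 r)
  have hconst : IntegrableOn (fun _ => a + L z) (closedBall (0 : E) r) μ :=
    integrableOn_const measure_closedBall_lt_top.ne
  simp_rw [← add_assoc]
  rw [integral_add hconst hint,
    setIntegral_closedBall_zero_continuousLinearMap, setIntegral_const, smul_eq_mul,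
    Measure.addHaar_real_closedBall_center μ z, add_zero, mul_comm]
end

theorem InnerProductSpace.inv_volume_real_unitClosedBall {E : Type*} [NormedAddCommGroup E]
    [InnerProductSpace ℝ E] [FiniteDimensional ℝ E] [MeasurableSpace E] [BorelSpace E]
    [Nontrivial E] :
    (volume.real (closedBall (0 : E) 1))⁻¹ =
      Gamma (finrank ℝ E / 2 + 1) / π ^ ((finrank ℝ E : ℝ) / 2) := by
  have hsqrt : √π ^ finrank ℝ E = π ^ ((finrank ℝ E : ℝ) / 2) := by
    rw [sqrt_eq_rpow, ← rpow_natCast, ← rpow_mul pi_nonneg]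
    ring_nf
  rw [measureReal_def, InnerProductSpace.volume_closedBall, ENNReal.ofReal_one, one_pow, one_mul,
    ENNReal.toReal_ofReal (by positivity), hsqrt, inv_div]

theorem gamma_div_pi_rpow_eq_inv_volume_real_unitClosedBall (d : ℕ) (hd : 2 ≤ d) :
    Gamma (((d : ℝ) + 1) / 2) / π ^ (((d : ℝ) - 1) / 2) =
      (volume.real (closedBall (0 : EuclideanSpace ℝ (Fin (d - 1))) 1))⁻¹ := by
  have : Nonempty (Fin (d - 1)) := ⟨⟨0, by omega⟩⟩
  rw [InnerProductSpace.inv_volume_real_unitClosedBall, finrank_euclideanSpace_fin,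
    Nat.cast_sub (by omega : 1 ≤ d)]
  ring_nf

theorem tauInfty_closedBall (d : ℕ) (hd : 3 ≤ d) (z : EuclideanSpace ℝ (Fin (d - 1))) {r : ℝ}
    (hr : 0 ≤ r) (hsub : closedBall z r ⊆ closedBall 0 1) :
    tauInfty d hd (closedBall z r) = ENNReal.ofReal ((1 + z ⟨d - 2, by omega⟩) * r ^ (d - 1)) := by
  set i : Fin (d - 1) := ⟨d - 2, by omega⟩
  set V := volume.real (closedBall (0 : EuclideanSpace ℝ (Fin (d - 1))) 1)
  have hV : V ≠ 0 := (ENNReal.toReal_pos (measure_closedBall_pos volume 0 one_pos).ne'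
    measure_closedBall_lt_top.ne).ne'
  have hdensity_nonneg : ∀ x ∈ closedBall z r, 0 ≤ V⁻¹ * (1 + x i) := by
    intro x hx
    have hx1 : ‖x i‖ ≤ 1 := (PiLp.norm_apply_le x i).trans (mem_closedBall_zero_iff.mp (hsub hx))
    exact mul_nonneg (inv_nonneg.mpr measureReal_nonneg) (by linarith [neg_le_of_abs_le hx1])
  have hint : IntegrableOn (fun x : EuclideanSpace ℝ (Fin (d - 1)) => V⁻¹ * (1 + x i))
      (closedBall z r) :=
    (by fun_prop : Continuous _).continuousOn.integrableOn_compact (isCompact_closedBall z r)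
  have hmean : ∫ x in closedBall z r, (1 + x i) = (1 + z i) * volume.real (closedBall z r) :=
    setIntegral_closedBall_const_add_continuousLinearMap volume 1 (EuclideanSpace.proj i) z r
  rw [tauInfty, gamma_div_pi_rpow_eq_inv_volume_real_unitClosedBall d (by omega),
    withDensity_apply _ measurableSet_closedBall, Measure.restrict_restrict measurableSet_closedBall,
    inter_eq_left.mpr hsub, ← ofReal_integral_eq_lintegral_ofReal hint
      (ae_restrict_of_forall_mem measurableSet_closedBall hdensity_nonneg), integral_const_mul,
    hmean, Measure.addHaar_real_closedBall' volume z hr, finrank_euclideanSpace_fin]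
  congr 1
  field_simp
  ring

/-- (a) `τ_∞(B_r(0)) = r^{d-1}` for `0 ≤ r ≤ 1`; and (b) for `y = (0, …, 0, -1+r)`,
`τ_∞(B_r(y)) = r^d` for `0 ≤ r ≤ 1`. -/
theorem tauInfty_ball_measures (d : ℕ) (hd : 3 ≤ d) (r : ℝ) (hr : r ∈ Set.Icc (0 : ℝ) 1) :
    tauInfty d hd (Metric.closedBall (0 : EuclideanSpace ℝ (Fin (d - 1))) r) =
        ENNReal.ofReal (r ^ (d - 1)) ∧
      tauInfty d hd (Metric.closedBall
          (WithLp.toLp 2 (fun i : Fin (d - 1) => if (i : ℕ) = d - 2 then -1 + r else 0) : EuclideanSpace ℝ (Fin (d - 1))) r) =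
        ENNReal.ofReal (r ^ d) := by
  obtain ⟨hr0, hr1⟩ := hr
  set i : Fin (d - 1) := ⟨d - 2, by omega⟩
  have hy : (WithLp.toLp 2 (fun i : Fin (d - 1) => if (i : ℕ) = d - 2 then -1 + r else 0) :
      EuclideanSpace ℝ (Fin (d - 1))) = PiLp.single 2 (β := fun _ => ℝ) i (-1 + r) := by
    ext j
    simp [i, Fin.ext_iff]
  have hy_norm : ‖PiLp.single 2 (β := fun _ => ℝ) i (-1 + r)‖ = 1 - r := by
    rw [PiLp.norm_single, Real.norm_eq_abs, abs_of_nonpos (by linarith)]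
    ring
  refine ⟨?_, ?_⟩
  · simpa using tauInfty_closedBall d hd 0 hr0 (closedBall_subset_closedBall hr1)
  · rw [hy, tauInfty_closedBall d hd _ hr0
      (closedBall_subset_closedBall' (by rw [dist_zero_right, hy_norm]; linarith))]
    rw [PiLp.single_apply, if_pos rfl, add_neg_cancel_left, ← pow_succ',
      Nat.sub_add_cancel (by omega : 1 ≤ d)]
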